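/- The Montague–Scott Hierarchy axiom holds in ZF: for every set a there exists a set h such that for every k ⊆ h, either pot(k) ∈ h or a ⊆ pot(k). -/

import Mathlib

/-!
Levels behave like the stages of the cumulative hierarchy. Every member of a history is
transitive (by ∈-induction, since `pot` of transitive sets is transitive), hence a level, and
every level `s` is `pot` of the levels it contains. From this, `pot k` is a level whenever `k`
is a set of levels, levels are linearly ordered by `∈`, and every set lies below some level.
For the witness take the levels inside a level `s ⊇ a`: for `k` a set of such levels, `pot k`
is a level, so either `pot k ∈ s` or `s ⊆ pot k`.
-/

def pot (a : ZFSet) : ZFSet :=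
  ZFSet.sep (fun x => ∃ c ∈ a, x ⊆ c) (ZFSet.powerset (ZFSet.sUnion a))

def Potent (a : ZFSet) : Prop := ∀ x, (∃ c, x ⊆ c ∧ c ∈ a) → x ∈ a

def IsHistory (h : ZFSet) : Prop := ∀ x ∈ h, x = pot (x ∩ h)

def IsLevel (s : ZFSet) : Prop := ∃ h, IsHistory h ∧ s = pot h

open ZFSet

theorem mem_pot {x a : ZFSet} : x ∈ pot a ↔ ∃ c ∈ a, x ⊆ c := by
  refine ⟨fun h => (mem_sep.1 h).2, fun ⟨c, hc, hxc⟩ => mem_sep.2 ⟨?_, c, hc, hxc⟩⟩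
  exact mem_powerset.2 fun z hz => mem_sUnion_of_mem (hxc hz) hc

theorem subset_pot_self (a : ZFSet) : a ⊆ pot a :=
  fun c hc => mem_pot.2 ⟨c, hc, subset_rfl⟩

theorem pot_mono {a b : ZFSet} (h : a ⊆ b) : pot a ⊆ pot b := fun x hx => by
  obtain ⟨c, hc, hxc⟩ := mem_pot.1 hx
  exact mem_pot.2 ⟨c, h hc, hxc⟩

theorem mem_pot_of_subset {x y a : ZFSet} (hxy : x ⊆ y) (hy : y ∈ pot a) : x ∈ pot a := by
  obtain ⟨c, hc, hyc⟩ := mem_pot.1 hy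
  exact mem_pot.2 ⟨c, hc, hxy.trans hyc⟩

theorem pot_eq_of_subset_of_subset_pot {k b : ZFSet} (hkb : k ⊆ b) (hbk : b ⊆ pot k) :
    pot b = pot k := by
  refine ext fun x => ⟨fun hx => ?_, fun hx => pot_mono hkb hx⟩
  obtain ⟨c, hc, hxc⟩ := mem_pot.1 hx
  exact mem_pot_of_subset hxc (hbk hc)

theorem isTransitive_pot {k : ZFSet} (hk : ∀ t ∈ k, t.IsTransitive) : (pot k).IsTransitive :=
  fun y hy z hz => by
    obtain ⟨t, ht, hyt⟩ := mem_pot.1 hy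
    exact mem_pot.2 ⟨t, ht, (hk t ht).subset_of_mem (hyt hz)⟩

theorem IsHistory.isTransitive_of_mem {h : ZFSet} (hh : IsHistory h) :
    ∀ c ∈ h, c.IsTransitive := by
  intro c
  induction c using inductionOn with
  | _ c IH =>
    intro hc
    rw [hh c hc]
    exact isTransitive_pot fun t ht => IH t (mem_inter.1 ht).1 (mem_inter.1 ht).2

theorem IsHistory.inter_of_mem {h c : ZFSet} (hh : IsHistory h) (hc : c ∈ h) :
    IsHistory (c ∩ h) := by
  intro y hy
  obtain ⟨hyc, hyh⟩ := mem_inter.1 hy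
  have hyc' : y ⊆ c := (hh.isTransitive_of_mem c hc).subset_of_mem hyc
  have : y ∩ (c ∩ h) = y ∩ h := ext fun z => by
    simp only [mem_inter]
    exact ⟨fun hz => ⟨hz.1, hz.2.2⟩, fun hz => ⟨hz.1, hyc' hz.1, hz.2⟩⟩
  rw [this]
  exact hh y hyh

theorem IsHistory.isLevel_of_mem {h c : ZFSet} (hh : IsHistory h) (hc : c ∈ h) : IsLevel c :=
  ⟨c ∩ h, hh.inter_of_mem hc, hh c hc⟩

theorem IsLevel.isTransitive {s : ZFSet} (hs : IsLevel s) : s.IsTransitive := by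
  obtain ⟨h, hh, rfl⟩ := hs
  exact isTransitive_pot hh.isTransitive_of_mem

theorem IsLevel.mem_of_subset {s x y : ZFSet} (hs : IsLevel s) (hxy : x ⊆ y) (hy : y ∈ s) :
    x ∈ s := by
  obtain ⟨h, -, rfl⟩ := hs
  exact mem_pot_of_subset hxy hy

def levs (s : ZFSet) : ZFSet := ZFSet.sep IsLevel s

theorem mem_levs {s x : ZFSet} : x ∈ levs s ↔ x ∈ s ∧ IsLevel x := mem_sep

theorem levs_subset (s : ZFSet) : levs s ⊆ s := fun _ hx => (mem_levs.1 hx).1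

theorem levs_eq_inter_levs {r s : ZFSet} (hrs : r ⊆ s) : levs r = r ∩ levs s :=
  ext fun q => by
    simp only [mem_inter, mem_levs]
    exact ⟨fun hq => ⟨hq.1, hrs hq.1, hq.2⟩, fun hq => ⟨hq.1, hq.2.2⟩⟩

theorem IsLevel.eq_pot_levs {s : ZFSet} (hs : IsLevel s) : s = pot (levs s) := by
  obtain ⟨h, hh, rfl⟩ := hs
  have hh_levs : h ⊆ levs (pot h) :=
    fun c hc => mem_levs.2 ⟨subset_pot_self h hc, hh.isLevel_of_mem hc⟩
  exact (pot_eq_of_subset_of_subset_pot hh_levs (levs_subset _)).symm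

theorem ZFSet.IsTransitive.isHistory_levs {s : ZFSet} (hs : s.IsTransitive) :
    IsHistory (levs s) := by
  intro r hr
  obtain ⟨hrs, hrl⟩ := mem_levs.1 hr
  rw [← levs_eq_inter_levs (hs.subset_of_mem hrs)]
  exact hrl.eq_pot_levs

theorem isLevel_pot {k : ZFSet} (hk : ∀ t ∈ k, IsLevel t) : IsLevel (pot k) := by
  have hk_levs : k ⊆ levs (pot k) := fun t ht => mem_levs.2 ⟨subset_pot_self k ht, hk t ht⟩
  refine ⟨levs (pot k), (isTransitive_pot fun t ht => (hk t ht).isTransitive).isHistory_levs, ?_⟩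
  exact (pot_eq_of_subset_of_subset_pot hk_levs (levs_subset _)).symm

theorem IsLevel.subset_of_forall_mem {s t : ZFSet} (hs : IsLevel s) (ht : IsLevel t)
    (hcmp : ∀ r ∈ s, IsLevel r → r ∈ t ∨ r = t ∨ t ∈ r) (hts : t ∉ s) : s ⊆ t := by
  intro x hx
  rw [hs.eq_pot_levs] at hx
  obtain ⟨r, hr, hxr⟩ := mem_pot.1 hx
  obtain ⟨hrs, hrl⟩ := mem_levs.1 hr
  rcases hcmp r hrs hrl with hrt | rfl | htr
  · exact ht.mem_of_subset hxr hrt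
  · exact absurd hrs hts
  · exact absurd (hs.isTransitive.subset_of_mem hrs htr) hts

theorem IsLevel.trichotomy {s : ZFSet} (hs : IsLevel s) :
    ∀ {t : ZFSet}, IsLevel t → s ∈ t ∨ s = t ∨ t ∈ s := by
  induction s using inductionOn with
  | _ s IHs =>
    intro t ht
    induction t using inductionOn with
    | _ t IHt =>
      by_contra! hcon
      obtain ⟨hst, hne, hts⟩ := hcon
      have hsub : s ⊆ t := hs.subset_of_forall_mem ht (fun r hr hrl => IHs r hr hrl ht) hts
      have hsup : t ⊆ s := ht.subset_of_forall_mem hs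
        (fun q hq hql => by
          rcases IHt q hq hql with hsq | rfl | hqs
          exacts [Or.inr (Or.inr hsq), Or.inr (Or.inl rfl), Or.inl hqs]) hst
      exact hne (le_antisymm hsub hsup)

attribute [local instance] Classical.allZFSetDefinable in
theorem exists_isLevel_superset (a : ZFSet) : ∃ s, IsLevel s ∧ a ⊆ s := by
  induction a using inductionOn with
  | _ a IH =>
    let above (x : ZFSet) : ZFSet := Classical.epsilon fun s => IsLevel s ∧ x ⊆ s
    have habove : ∀ x ∈ a, IsLevel (above x) ∧ x ⊆ above x :=
      fun x hx => Classical.epsilon_spec (IH x hx)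
    refine ⟨pot (image above a), isLevel_pot fun t ht => ?_, fun x hx => ?_⟩
    · obtain ⟨x, hx, rfl⟩ := mem_image.1 ht
      exact (habove x hx).1
    · exact mem_pot.2 ⟨above x, mem_image.2 ⟨x, hx, rfl⟩, (habove x hx).2⟩

theorem stmt15 (a : ZFSet) :
    ∃ h : ZFSet, ∀ k : ZFSet, k ⊆ h → (pot k ∈ h ∨ a ⊆ pot k) := by
  obtain ⟨s, hs, has⟩ := exists_isLevel_superset a
  refine ⟨levs s, fun k hk => ?_⟩
  have hpot : IsLevel (pot k) := isLevel_pot fun t ht => (mem_levs.1 (hk ht)).2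
  rcases hpot.trichotomy hs with hks | rfl | hsk
  · exact Or.inl (mem_levs.2 ⟨hks, hpot⟩)
  · exact Or.inr has
  · exact Or.inr (has.trans (hpot.isTransitive.subset_of_mem hsk))
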